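/- The covertical connection coefficients obtained from γ₀(t,q) are (γ₀^α, -(∂_ρ γ₀^β)p_β): i.e., for the induced transformation p̄ = (D_qφ)⁻ᵀ p on momenta arising from q̄ = φ(t,q), the momentum component of the transformed connection satisfies the transformation law of a connection on the bundle V*(Q) → B when γ₀ = 0 and φ is time-dependent. -/

import Mathlib

open Matrix

private lemma aux_clm_apply_eq_sum {n : ℕ} (L : (Fin n → ℝ) →L[ℝ] (Fin n → ℝ)) (v : Fin n → ℝ) :
    L v = ∑ j, v j • L (Pi.single j 1) := by
  have hv : v = ∑ j, v j • (Pi.single j 1 : Fin n → ℝ) := by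
    ext k; simp [Pi.single_apply, Finset.sum_ite_eq', mul_comm]
  conv_lhs => rw [hv]
  rw [map_sum]
  exact Finset.sum_congr rfl fun j _ => by rw [_root_.map_smul]

private lemma aux_det_diff {m : ℕ} {t : ℝ} (N : ℝ → Matrix (Fin m) (Fin m) ℝ)
    (h : ∀ i j, DifferentiableAt ℝ (fun τ => N τ i j) t) :
    DifferentiableAt ℝ (fun τ => (N τ).det) t := by
  simp only [Matrix.det_apply']
  exact DifferentiableAt.fun_sum fun σ _ =>
    ((DifferentiableAt.fun_finsetProd fun i _ => h (σ i) i).const_mul _)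

private lemma aux_adj_diff {m : ℕ} {t : ℝ} (N : ℝ → Matrix (Fin m) (Fin m) ℝ)
    (h : ∀ i j, DifferentiableAt ℝ (fun τ => N τ i j) t) (i j : Fin m) :
    DifferentiableAt ℝ (fun τ => (N τ).adjugate i j) t := by
  simp only [Matrix.adjugate_apply]
  apply aux_det_diff
  intro a b
  rcases eq_or_ne a j with rfl | hne
  · simp only [Matrix.updateRow_self]
    exact differentiableAt_const _
  · simp only [Matrix.updateRow_ne hne]
    exact h a b

/-- Derivative of the inverse-transpose of a matrix-valued curve, applied to a vector. -/
private lemma aux_B_deriv {n : ℕ} {t : ℝ} (M : ℝ → Matrix (Fin n) (Fin n) ℝ)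
    (M' : Matrix (Fin n) (Fin n) ℝ)
    (hM : ∀ i j, HasDerivAt (fun τ => M τ i j) (M' i j) t)
    (hU : ∀ τ, IsUnit (M τ)) (p : Fin n → ℝ) :
    deriv (fun τ => ((M τ)ᵀ)⁻¹.mulVec p) t
      = (-(((M t)ᵀ)⁻¹ * M'ᵀ * ((M t)ᵀ)⁻¹)).mulVec p := by
  have hdet : ∀ τ, IsUnit (M τ).det := fun τ => (Matrix.isUnit_iff_isUnit_det _).mp (hU τ)
  have hdetne : ∀ τ, (M τ).det ≠ 0 := fun τ => (hdet τ).ne_zero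
  have hBentry : ∀ (τ : ℝ) (i j : Fin n),
      ((M τ)ᵀ)⁻¹ i j = ((M τ).det)⁻¹ * (M τ).adjugate j i := by
    intro τ i j
    rw [← Matrix.transpose_nonsing_inv, Matrix.transpose_apply, Matrix.inv_def,
      Matrix.smul_apply, Ring.inverse_eq_inv', smul_eq_mul]
  have hBdiff : ∀ i j, DifferentiableAt ℝ (fun τ => ((M τ)ᵀ)⁻¹ i j) t := by
    intro i j
    simp only [hBentry]
    exact ((aux_det_diff M fun a b => (hM a b).differentiableAt).inv (hdetne t)).mul
      (aux_adj_diff M (fun a b => (hM a b).differentiableAt) j i)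
  set B : Matrix (Fin n) (Fin n) ℝ := ((M t)ᵀ)⁻¹ with hBdef
  set B' : Matrix (Fin n) (Fin n) ℝ :=
    Matrix.of (fun i j => deriv (fun τ => ((M τ)ᵀ)⁻¹ i j) t) with hB'def
  have hB' : ∀ i j, HasDerivAt (fun τ => ((M τ)ᵀ)⁻¹ i j) (B' i j) t := fun i j =>
    (hBdiff i j).hasDerivAt
  have heq : M'ᵀ * B + (M t)ᵀ * B' = 0 := by
    ext i k
    have h1 : HasDerivAt (fun τ => ∑ j, (M τ)ᵀ i j * ((M τ)ᵀ)⁻¹ j k)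
        (∑ j, (M'ᵀ i j * B j k + (M t)ᵀ i j * B' j k)) t := by
      apply HasDerivAt.fun_sum
      intro j _
      exact ((hM j i).mul (hB' j k) : HasDerivAt _ _ t)
    have h2 : (fun τ => ∑ j, (M τ)ᵀ i j * ((M τ)ᵀ)⁻¹ j k)
        = fun _ => (1 : Matrix (Fin n) (Fin n) ℝ) i k := by
      funext τ
      have hmul := Matrix.mul_nonsing_inv ((M τ)ᵀ) (by rw [Matrix.det_transpose]; exact hdet τ)
      calc ∑ j, (M τ)ᵀ i j * ((M τ)ᵀ)⁻¹ j k = ((M τ)ᵀ * ((M τ)ᵀ)⁻¹) i k := by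
            rw [Matrix.mul_apply]
        _ = (1 : Matrix (Fin n) (Fin n) ℝ) i k := by rw [hmul]
    rw [h2] at h1
    have h3 := (hasDerivAt_const t ((1 : Matrix (Fin n) (Fin n) ℝ) i k)).unique h1
    simp only [Matrix.add_apply, Matrix.mul_apply, Matrix.zero_apply]
    rw [← Finset.sum_add_distrib]
    exact h3.symm
  have hBMt : B * (M t)ᵀ = 1 :=
    Matrix.nonsing_inv_mul ((M t)ᵀ) (by rw [Matrix.det_transpose]; exact hdet t)
  have hB'eq : B' = -(B * M'ᵀ * B) := by
    have h4 : (M t)ᵀ * B' = -(M'ᵀ * B) := eq_neg_of_add_eq_zero_right heq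
    calc B' = (B * (M t)ᵀ) * B' := by rw [hBMt, one_mul]
      _ = B * ((M t)ᵀ * B') := by rw [mul_assoc]
      _ = B * (-(M'ᵀ * B)) := by rw [h4]
      _ = -(B * M'ᵀ * B) := by rw [mul_neg, mul_assoc]
  have h5 : HasDerivAt (fun τ => ((M τ)ᵀ)⁻¹.mulVec p) (B'.mulVec p) t := by
    rw [hasDerivAt_pi]
    intro i
    have h6 : (fun τ => ((M τ)ᵀ)⁻¹.mulVec p i) = fun τ => ∑ j, ((M τ)ᵀ)⁻¹ i j * p j := by
      funext τ; rw [Matrix.mulVec, dotProduct]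
    have h7 : B'.mulVec p i = ∑ j, B' i j * p j := by rw [Matrix.mulVec, dotProduct]
    rw [h6, h7]
    exact HasDerivAt.fun_sum fun j _ => (hB' i j).mul_const (p j)
  have h8 := h5.deriv
  rw [hB'eq] at h8
  exact h8

/-- The covertical connection induced on the momentum phase space by a
time-dependent configuration transformation `q̄ = φ(t,q)` (with momenta
transforming as `p̄ = (D_qφ)⁻ᵀ p`) starting from the trivial connection has
momentum component `-(∂_ρ γ̄₀^β) p̄_β`, where `γ̄₀(t,q̄) = ∂ₜφ(t, φ⁻¹(t,q̄))`. -/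
theorem covertical_connection_momentum_component {n : ℕ}
    (φ φinv : ℝ → (Fin n → ℝ) → (Fin n → ℝ))
    (hφ : ContDiff ℝ (⊤ : ℕ∞) (fun z : ℝ × (Fin n → ℝ) => φ z.1 z.2))
    (hinv₁ : ∀ t q, φinv t (φ t q) = q)
    (hinv₂ : ∀ t z, φ t (φinv t z) = z)
    (A : ℝ → (Fin n → ℝ) → Matrix (Fin n) (Fin n) ℝ)
    (hA : ∀ t q, A t q = Matrix.of fun i j => fderiv ℝ (φ t) q (Pi.single j 1) i)
    (hAunit : ∀ t q, IsUnit (A t q))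
    (γb : ℝ → (Fin n → ℝ) → Fin n → ℝ)
    (hγb : ∀ t z, γb t z = deriv (fun τ => φ τ (φinv t z)) t) :
    ∀ (t : ℝ) (q p : Fin n → ℝ),
      deriv (fun τ => ((A τ q)ᵀ)⁻¹.mulVec p) t =
        -((Matrix.of fun β ρ =>
            fderiv ℝ (γb t) (φ t q) (Pi.single ρ 1) β)ᵀ.mulVec
              (((A t q)ᵀ)⁻¹.mulVec p)) := by
  intro t q p
  set F : ℝ × (Fin n → ℝ) → (Fin n → ℝ) := fun z => φ z.1 z.2 with hF
  set H := fderiv ℝ F with hHdef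
  have hH : ContDiff ℝ 1 H := hφ.fderiv_right (WithTop.coe_le_coe.mpr le_top)
  -- slice derivative in q
  have hslice : ∀ (τ : ℝ) (q' : Fin n → ℝ),
      HasFDerivAt (φ τ) ((H (τ, q')).comp (ContinuousLinearMap.inr ℝ ℝ (Fin n → ℝ))) q' := by
    intro τ q'
    have h1 : HasFDerivAt (fun x : Fin n → ℝ => (τ, x))
        (ContinuousLinearMap.inr ℝ ℝ (Fin n → ℝ)) q' :=
      (hasFDerivAt_const τ q').prodMk (hasFDerivAt_id q')
    exact ((hφ.differentiable (by simp)) (τ, q')).hasFDerivAt.comp q' h1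
  -- time derivative
  have htime : ∀ (τ : ℝ) (q' : Fin n → ℝ),
      HasDerivAt (fun s => φ s q') (H (τ, q') (1, 0)) τ := by
    intro τ q'
    have h1 : HasDerivAt (fun s : ℝ => (s, q')) ((1 : ℝ), (0 : Fin n → ℝ)) τ :=
      (hasDerivAt_id τ).prodMk (hasDerivAt_const τ q')
    exact ((hφ.differentiable (by simp)) (τ, q')).hasFDerivAt.comp_hasDerivAt τ h1
  -- fderiv of g : q' ↦ H (t, q') (1, 0)
  have hK : HasFDerivAt (fun q' => H (t, q'))
      ((fderiv ℝ H (t, q)).comp (ContinuousLinearMap.inr ℝ ℝ (Fin n → ℝ))) q := by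
    have h1 : HasFDerivAt (fun x : Fin n → ℝ => (t, x))
        (ContinuousLinearMap.inr ℝ ℝ (Fin n → ℝ)) q :=
      (hasFDerivAt_const t q).prodMk (hasFDerivAt_id q)
    exact ((hH.differentiable one_ne_zero) (t, q)).hasFDerivAt.comp q h1
  set Dg : (Fin n → ℝ) →L[ℝ] (Fin n → ℝ) :=
    (ContinuousLinearMap.apply ℝ (Fin n → ℝ) ((1:ℝ), (0 : Fin n → ℝ))).comp
      ((fderiv ℝ H (t, q)).comp (ContinuousLinearMap.inr ℝ ℝ (Fin n → ℝ))) with hDg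
  have hg : HasFDerivAt (fun q' => H (t, q') ((1:ℝ), (0 : Fin n → ℝ))) Dg q :=
    ((ContinuousLinearMap.apply ℝ (Fin n → ℝ)
      ((1:ℝ), (0 : Fin n → ℝ))).hasFDerivAt).comp q hK
  -- time derivative of τ ↦ H (τ, q)
  have hHt : HasDerivAt (fun τ => H (τ, q)) (fderiv ℝ H (t, q) ((1:ℝ), (0 : Fin n → ℝ))) t := by
    have h1 : HasDerivAt (fun s : ℝ => (s, q)) ((1 : ℝ), (0 : Fin n → ℝ)) t :=
      (hasDerivAt_id t).prodMk (hasDerivAt_const t q)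
    exact ((hH.differentiable one_ne_zero) (t, q)).hasFDerivAt.comp_hasDerivAt t h1
  -- Schwarz symmetry of the second derivative
  have hsym : ∀ v w, fderiv ℝ H (t, q) v w = fderiv ℝ H (t, q) w v := by
    have h2 : ContDiffAt ℝ 2 F (t, q) := (hφ.contDiffAt).of_le (WithTop.coe_le_coe.mpr le_top)
    have h3 := h2.isSymmSndFDerivAt (by norm_num)
    exact fun v w => h3 v w
  -- entries of A in terms of H
  have hMentry : ∀ (τ : ℝ) (i j : Fin n),
      A τ q i j = H (τ, q) ((0:ℝ), Pi.single j 1) i := by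
    intro τ i j
    rw [hA]
    have h4 := (hslice τ q).fderiv
    show fderiv ℝ (φ τ) q (Pi.single j 1) i = _
    rw [h4]
    rfl
  -- time derivative of the Jacobian matrix entries
  set M' : Matrix (Fin n) (Fin n) ℝ :=
    Matrix.of (fun i j => fderiv ℝ H (t, q) ((1:ℝ), (0 : Fin n → ℝ))
      ((0:ℝ), Pi.single j 1) i) with hM'
  have hM : ∀ i j, HasDerivAt (fun τ => A τ q i j) (M' i j) t := by
    intro i j
    have hc : (fun τ => A τ q i j) = fun τ =>
        ((ContinuousLinearMap.proj i).comp
          (ContinuousLinearMap.apply ℝ (Fin n → ℝ) ((0:ℝ), Pi.single j 1))) (H (τ, q)) := by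
      funext τ
      rw [hMentry τ i j]
      rfl
    rw [hc]
    exact (((ContinuousLinearMap.proj i).comp
      (ContinuousLinearMap.apply ℝ (Fin n → ℝ) ((0:ℝ), Pi.single j 1))).hasFDerivAt
        (x := H (t,q))).comp_hasDerivAt t hHt
  -- the left-hand side via aux_B_deriv
  have hLHS := aux_B_deriv (fun τ => A τ q) M' hM (fun τ => hAunit τ q) p
  -- derivative of the inverse map
  have hφt : ContDiff ℝ (⊤ : ℕ∞) (φ t) := by
    have h5 : ContDiff ℝ (⊤ : ℕ∞) (fun x : Fin n → ℝ => (t, x)) := contDiff_const.prodMk contDiff_id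
    exact hφ.comp h5
  have hfd : ∀ v, fderiv ℝ (φ t) q v = (A t q).mulVec v := by
    intro v
    rw [aux_clm_apply_eq_sum (fderiv ℝ (φ t) q) v]
    ext i
    simp only [Finset.sum_apply, Pi.smul_apply, smul_eq_mul]
    rw [hA]
    simp only [Matrix.mulVec, dotProduct, Matrix.of_apply]
    exact Finset.sum_congr rfl fun j _ => mul_comm _ _
  haveI : Invertible (A t q) := (hAunit t q).invertible
  set e₀ : (Fin n → ℝ) ≃ₗ[ℝ] (Fin n → ℝ) := (A t q).toLinearEquiv' ‹_› with he₀
  set e : (Fin n → ℝ) ≃L[ℝ] (Fin n → ℝ) := e₀.toContinuousLinearEquiv with he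
  have hecoe : (e : (Fin n → ℝ) →L[ℝ] (Fin n → ℝ)) = fderiv ℝ (φ t) q := by
    apply ContinuousLinearMap.ext
    intro v
    have h6 : e v = Matrix.toLin' (A t q) v := rfl
    rw [ContinuousLinearEquiv.coe_coe, h6, hfd, Matrix.toLin'_apply]
  have hstrict : HasStrictFDerivAt (φ t) (e : (Fin n → ℝ) →L[ℝ] (Fin n → ℝ)) q := by
    rw [hecoe]
    exact (hφt.contDiffAt).hasStrictFDerivAt (by simp)
  have hψ := hstrict.to_localInverse
  have heqv : φinv t =ᶠ[nhds (φ t q)] hstrict.localInverse (φ t) e q :=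
    hstrict.localInverse_unique (Filter.Eventually.of_forall fun x => hinv₁ t x)
  have hginv : HasFDerivAt (φinv t)
      ((e.symm : (Fin n → ℝ) →L[ℝ] (Fin n → ℝ))) (φ t q) :=
    hψ.hasFDerivAt.congr_of_eventuallyEq heqv
  have hesymm : ∀ v, e.symm v = (A t q)⁻¹.mulVec v := by
    intro v
    have h7 : e.symm v = e₀.symm v := rfl
    have h8 : e₀.symm v = Matrix.toLin' (⅟(A t q)) v := by
      have h9 := Matrix.toLinearEquiv'_symm_apply (A t q) ‹_›
      exact congrFun (congrArg
        (fun (f : Module.End ℝ (Fin n → ℝ)) => (f : (Fin n → ℝ) → (Fin n → ℝ))) h9) v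
    rw [h7, h8, Matrix.invOf_eq_nonsing_inv, Matrix.toLin'_apply]
  -- γb t = g ∘ φinv t
  have hgb : γb t = fun z => H (t, φinv t z) ((1:ℝ), (0 : Fin n → ℝ)) := by
    funext z
    rw [hγb t z, (htime t (φinv t z)).deriv]
  have hγfd : HasFDerivAt (γb t)
      (Dg.comp (e.symm : (Fin n → ℝ) →L[ℝ] (Fin n → ℝ))) (φ t q) := by
    rw [hgb]
    have hg' : HasFDerivAt (fun q' => H (t, q') ((1:ℝ), (0 : Fin n → ℝ))) Dg
        (φinv t (φ t q)) := by rw [hinv₁ t q]; exact hg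
    exact hg'.comp (φ t q) hginv
  -- identify the connection-coefficient matrix
  have hΓ : (Matrix.of fun β ρ => fderiv ℝ (γb t) (φ t q) (Pi.single ρ 1) β)
      = M' * (A t q)⁻¹ := by
    ext β ρ
    rw [Matrix.of_apply, hγfd.fderiv]
    have h10 : (Dg.comp (e.symm : (Fin n → ℝ) →L[ℝ] (Fin n → ℝ))) (Pi.single ρ 1)
        = Dg ((A t q)⁻¹.mulVec (Pi.single ρ 1)) := by
      rw [ContinuousLinearMap.comp_apply, ContinuousLinearEquiv.coe_coe, hesymm]
    rw [h10, Matrix.mulVec_single_one]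
    have hDgs : ∀ σ : Fin n, Dg (Pi.single σ 1) β = M' β σ := by
      intro σ
      have h11 : Dg (Pi.single σ 1)
          = fderiv ℝ H (t, q) ((0:ℝ), Pi.single σ 1) ((1:ℝ), (0 : Fin n → ℝ)) := rfl
      rw [h11]
      have h12 := congrFun (hsym ((0:ℝ), Pi.single σ 1) ((1:ℝ), (0 : Fin n → ℝ))) β
      rw [h12]
      rfl
    have h13 : (fun σ => (A t q)⁻¹ σ ρ * 1) = fun σ => (A t q)⁻¹ σ ρ := by
      funext σ; rw [mul_one]
    rw [aux_clm_apply_eq_sum Dg]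
    simp only [Finset.sum_apply, Pi.smul_apply, smul_eq_mul, hDgs, Matrix.col_apply]
    rw [Matrix.mul_apply]
    exact Finset.sum_congr rfl fun σ _ => mul_comm _ _
  -- final assembly
  rw [hLHS, hΓ, Matrix.transpose_mul, Matrix.transpose_nonsing_inv,
    Matrix.mulVec_mulVec, Matrix.neg_mulVec, mul_assoc]
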